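/- arXiv:2602.18682 — 4 statements merged into one kernel-verified Lean document; each statement's English description precedes it below -/
import Mathlib

section
/- Let Q₀ be a commutative ring with an action of a finite group W by ring automorphisms, and let θ ∈ Q₀ be a W-invariant element. For m ≥ 0 define Q_m = { f ∈ Q₀ | for all w ∈ W, w(f) - f ∈ (θ)^m }, where (θ)^m is the m-th power of the principal ideal generated by θ. If |W| is invertible in Q₀, then Q_m = Q₀^W + θ^m · Q₀, where Q₀^W is the subring of W-invariants. -/
/-- For a commutative ring `Q₀` with an action of a finite group `W` by
ring automorphisms, a `W`-invariant element `θ`, and `|W|` invertible in `Q₀`,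
the quasi-invariants `Q_m = {f | ∀ w, w f - f ∈ (θ)^m}` coincide with
`Q₀^W + θ^m · Q₀`. -/
theorem quasi_invariants_eq_invariants_plus_theta_pow
    (Q₀ : Type*) [CommRing Q₀] (W : Type*) [Group W] [Fintype W]
    [MulSemiringAction W Q₀]
    (θ : Q₀) (hθ : ∀ w : W, w • θ = θ)
    (hcard : IsUnit ((Fintype.card W : Q₀))) (m : ℕ) :
    {f : Q₀ | ∀ w : W, w • f - f ∈ (Ideal.span {θ}) ^ m} =
      {f : Q₀ | ∃ a b : Q₀, (∀ w : W, w • a = a) ∧ f = a + θ ^ m * b} := by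
  have hθm : ∀ w : W, w • (θ ^ m) = θ ^ m := fun w => by rw [smul_pow', hθ]
  ext f
  simp only [Set.mem_setOf_eq, Ideal.span_singleton_pow, Ideal.mem_span_singleton]
  constructor
  · intro hf
    obtain ⟨v, hv⟩ := hcard.exists_right_inv
    set n : Q₀ := (Fintype.card W : Q₀) with hn
    set S : Q₀ := ∑ w : W, w • f with hS
    have hSinv : ∀ w : W, w • S = S := by
      intro w
      rw [hS, Finset.smul_sum]
      exact Fintype.sum_equiv (Equiv.mulLeft w) _ _ (fun g => (mul_smul w g f).symm)
    have hdvd : θ ^ m ∣ S - n * f := by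
      have : S - n * f = ∑ w : W, (w • f - f) := by
        rw [Finset.sum_sub_distrib, Finset.sum_const, Finset.card_univ, hS, hn,
          nsmul_eq_mul]
      rw [this]
      exact Finset.dvd_sum (fun w _ => hf w)
    obtain ⟨c, hc⟩ := hdvd
    have hninv : ∀ w : W, w • n = n := fun w => by
      rw [hn]; exact map_natCast (MulSemiringAction.toRingHom W Q₀ w) _
    have hvinv : ∀ w : W, w • v = v := by
      intro w
      have h1 : n * (w • v) = 1 := by
        calc n * (w • v) = (w • n) * (w • v) := by rw [hninv]
        _ = w • (n * v) := (smul_mul' w n v).symm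
        _ = 1 := by rw [hv, smul_one]
      calc w • v = 1 * (w • v) := (one_mul _).symm
        _ = (v * n) * (w • v) := by rw [mul_comm v n, hv]
        _ = v * (n * (w • v)) := by ring
        _ = v := by rw [h1, mul_one]
    refine ⟨v * S, -(v * c), fun w => by rw [smul_mul', hvinv, hSinv], ?_⟩
    have h2 : n * f = S - θ ^ m * c := by rw [← hc]; ring
    calc f = v * n * f := by rw [mul_comm v n, hv, one_mul]
      _ = v * (n * f) := by rw [mul_assoc]
      _ = v * (S - θ ^ m * c) := by rw [h2]
      _ = v * S + θ ^ m * -(v * c) := by ring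
  · rintro ⟨a, b, ha, rfl⟩ w
    refine ⟨w • b - b, ?_⟩
    rw [smul_add, ha, smul_mul', hθm]
    ring
end

section
/- Let k be a field of characteristic zero, R = k[x₁,…,xₙ] with a finite group W acting by graded ring automorphisms such that the invariant ring R^W is a polynomial ring, θ ∈ R^W a nonzero homogeneous element, and suppose R is free of rank |W| over R^W. Then for each m ≥ 0 the ring Q_m = R^W + θ^m·R is a free R^W-module of rank |W|; in particular, Q_m is Cohen–Macaulay. -/
/-- The subring of `W`-invariants of a commutative ring with `W`-action. -/
def fixedSubring (W R : Type*) [Group W] [CommRing R] [MulSemiringAction W R] :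
    Subring R where
  carrier := {x | ∀ w : W, w • x = x}
  mul_mem' := by intro a b ha hb w; rw [smul_mul', ha w, hb w]
  one_mem' := by intro w; exact smul_one w
  add_mem' := by intro a b ha hb w; rw [smul_add, ha w, hb w]
  zero_mem' := by intro w; exact smul_zero w
  neg_mem' := by intro a ha w; rw [smul_neg, ha w]

section ReynoldsAux

variable {k : Type*} [Field k] [CharZero k] {n : ℕ}
variable (W : Type*) [Group W] [Fintype W]
  [MulSemiringAction W (MvPolynomial (Fin n) k)]

/-- The Reynolds operator: averaging over the group. -/
noncomputable def rey (x : MvPolynomial (Fin n) k) : MvPolynomial (Fin n) k :=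
  MvPolynomial.C (Fintype.card W : k)⁻¹ * ∑ w : W, w • x

variable {W}

lemma smul_C_card_inv (w : W) :
    w • (MvPolynomial.C (Fintype.card W : k)⁻¹ : MvPolynomial (Fin n) k)
      = MvPolynomial.C (Fintype.card W : k)⁻¹ := by
  have hcard : (Fintype.card W : k) ≠ 0 := Nat.cast_ne_zero.mpr Fintype.card_ne_zero
  have hC : (MvPolynomial.C (Fintype.card W : k) : MvPolynomial (Fin n) k)
      = ((Fintype.card W : ℕ) : MvPolynomial (Fin n) k) := by
    simp
  have hCne : (MvPolynomial.C (Fintype.card W : k) : MvPolynomial (Fin n) k) ≠ 0 := by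
    simpa using hcard
  have h1 : (MvPolynomial.C (Fintype.card W : k)⁻¹ : MvPolynomial (Fin n) k) *
      MvPolynomial.C (Fintype.card W : k) = 1 := by
    rw [← map_mul, inv_mul_cancel₀ hcard, map_one]
  have h3 : w • (MvPolynomial.C (Fintype.card W : k) : MvPolynomial (Fin n) k)
      = MvPolynomial.C (Fintype.card W : k) := by
    rw [hC]
    have h4 := map_natCast (MulSemiringAction.toRingHom W (MvPolynomial (Fin n) k) w)
      (Fintype.card W)
    rwa [MulSemiringAction.toRingHom_apply] at h4
  have h2 : (w • (MvPolynomial.C (Fintype.card W : k)⁻¹ : MvPolynomial (Fin n) k)) *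
      MvPolynomial.C (Fintype.card W : k) = 1 := by
    rw [← h3, ← smul_mul', h1, smul_one]
  exact mul_right_cancel₀ hCne (h2.trans h1.symm)

lemma rey_mem (x : MvPolynomial (Fin n) k) :
    rey W x ∈ fixedSubring W (MvPolynomial (Fin n) k) := by
  intro w
  unfold rey
  rw [smul_mul', smul_C_card_inv, Finset.smul_sum]
  congr 1
  exact Fintype.sum_equiv (Equiv.mulLeft w) _ _ (fun u => by
    simp [Equiv.mulLeft, mul_smul])

lemma rey_smul_invar {a : MvPolynomial (Fin n) k}
    (ha : a ∈ fixedSubring W (MvPolynomial (Fin n) k)) (x : MvPolynomial (Fin n) k) :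
    rey W (a * x) = a * rey W x := by
  unfold rey
  have h : (∑ w : W, w • (a * x)) = a * ∑ w : W, w • x := by
    rw [Finset.mul_sum]
    exact Finset.sum_congr rfl fun w _ => by rw [smul_mul', ha w]
  rw [h]; ring

lemma rey_fixed {a : MvPolynomial (Fin n) k}
    (ha : a ∈ fixedSubring W (MvPolynomial (Fin n) k)) : rey W a = a := by
  have hcard : (Fintype.card W : k) ≠ 0 := Nat.cast_ne_zero.mpr Fintype.card_ne_zero
  unfold rey
  rw [Finset.sum_congr rfl fun w _ => ha w, Finset.sum_const, Finset.card_univ,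
    nsmul_eq_mul]
  have hC : ((Fintype.card W : ℕ) : MvPolynomial (Fin n) k)
      = MvPolynomial.C (Fintype.card W : k) := by simp
  rw [hC, ← mul_assoc, ← map_mul, inv_mul_cancel₀ hcard, map_one, one_mul]

lemma rey_add (x y : MvPolynomial (Fin n) k) :
    rey W (x + y) = rey W x + rey W y := by
  unfold rey
  rw [Finset.sum_congr rfl fun w _ => smul_add w x y, Finset.sum_add_distrib, mul_add]

lemma rey_sub (x y : MvPolynomial (Fin n) k) :
    rey W (x - y) = rey W x - rey W y := by
  unfold rey
  rw [Finset.sum_congr rfl fun w _ => smul_sub w x y, Finset.sum_sub_distrib, mul_sub]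

lemma rey_sum {ι : Type*} (s : Finset ι) (f : ι → MvPolynomial (Fin n) k) :
    rey W (∑ i ∈ s, f i) = ∑ i ∈ s, rey W (f i) :=
  map_sum (AddMonoidHom.mk' (rey W) rey_add) f s

end ReynoldsAux

/-- Let `k` be a field of characteristic zero, `R = k[x₁,…,xₙ]` with a
finite group `W` acting by graded ring automorphisms such that the invariant ring `R^W`
is a polynomial ring, `θ ∈ R^W` a nonzero homogeneous element, and `R` free of rank `|W|`
over `R^W`. Then `Q_m = R^W + θ^m·R` is a free `R^W`-module of rank `|W|`
(hence Cohen–Macaulay). -/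
theorem Qm_free_of_rank_card
    (k : Type*) [Field k] [CharZero k] (n : ℕ)
    (W : Type*) [Group W] [Fintype W]
    [MulSemiringAction W (MvPolynomial (Fin n) k)]
    (hgraded : ∀ (w : W) (f : MvPolynomial (Fin n) k) (j : ℕ),
        f.IsHomogeneous j → (w • f).IsHomogeneous j)
    (hpoly : Nonempty
        ((fixedSubring W (MvPolynomial (Fin n) k)) ≃+* MvPolynomial (Fin n) k))
    (θ : MvPolynomial (Fin n) k) (hθW : θ ∈ fixedSubring W (MvPolynomial (Fin n) k))
    (hθ0 : θ ≠ 0) (d : ℕ) (hθhom : θ.IsHomogeneous d)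
    (bR : Fin (Fintype.card W) → MvPolynomial (Fin n) k)
    (hfree : ∀ x : MvPolynomial (Fin n) k,
        ∃! c : Fin (Fintype.card W) → fixedSubring W (MvPolynomial (Fin n) k),
          x = ∑ i, (c i : MvPolynomial (Fin n) k) * bR i)
    (m : ℕ) :
    ∃ bQ : Fin (Fintype.card W) → MvPolynomial (Fin n) k,
      (∀ i, ∃ a ∈ fixedSubring W (MvPolynomial (Fin n) k),
          ∃ y : MvPolynomial (Fin n) k, bQ i = a + θ ^ m * y) ∧
      ∀ x : MvPolynomial (Fin n) k,
        (∃ a ∈ fixedSubring W (MvPolynomial (Fin n) k),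
            ∃ y : MvPolynomial (Fin n) k, x = a + θ ^ m * y) →
        ∃! c : Fin (Fintype.card W) → fixedSubring W (MvPolynomial (Fin n) k),
          x = ∑ i, (c i : MvPolynomial (Fin n) k) * bQ i := by
  classical
  have hθmW : θ ^ m ∈ fixedSubring W (MvPolynomial (Fin n) k) := pow_mem hθW m
  have hθm0 : θ ^ m ≠ 0 := pow_ne_zero m hθ0
  set bQ : Fin (Fintype.card W) → MvPolynomial (Fin n) k :=
    fun i => rey W (bR i) + θ ^ m * (bR i - rey W (bR i)) with hbQ
  refine ⟨bQ, fun i => ⟨rey W (bR i), rey_mem _, bR i - rey W (bR i), rfl⟩, ?_⟩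
  have hkey : ∀ c : Fin (Fintype.card W) → fixedSubring W (MvPolynomial (Fin n) k),
      (∑ i, (c i : MvPolynomial (Fin n) k) * bQ i)
        = rey W (∑ i, (c i : MvPolynomial (Fin n) k) * bR i)
          + θ ^ m * ((∑ i, (c i : MvPolynomial (Fin n) k) * bR i)
              - rey W (∑ i, (c i : MvPolynomial (Fin n) k) * bR i)) := by
    intro c
    have hz : rey W (∑ i, (c i : MvPolynomial (Fin n) k) * bR i)
        = ∑ i, (c i : MvPolynomial (Fin n) k) * rey W (bR i) := by
      rw [rey_sum]
      exact Finset.sum_congr rfl fun i _ => rey_smul_invar (c i).2 _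
    rw [hz, ← Finset.sum_sub_distrib, Finset.mul_sum, ← Finset.sum_add_distrib]
    exact Finset.sum_congr rfl fun i _ => by rw [hbQ]; ring
  have hinj : ∀ u v : MvPolynomial (Fin n) k,
      rey W u + θ ^ m * (u - rey W u) = rey W v + θ ^ m * (v - rey W v) → u = v := by
    intro u v h
    have hρ : rey W u = rey W v := by
      have h2 := congrArg (rey W) h
      rw [rey_add, rey_add, rey_smul_invar hθmW, rey_smul_invar hθmW,
        rey_sub, rey_sub, rey_fixed (rey_mem u), rey_fixed (rey_mem v),
        sub_self, sub_self, mul_zero, add_zero, add_zero] at h2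
      exact h2
    rw [hρ] at h
    have h3 := mul_left_cancel₀ hθm0 (add_left_cancel h)
    exact sub_left_injective h3
  intro x hx
  obtain ⟨a, ha, y, hxy⟩ := hx
  set z : MvPolynomial (Fin n) k := a + θ ^ m * rey W y + (y - rey W y) with hzdef
  have hρz : rey W z = a + θ ^ m * rey W y := by
    rw [hzdef, rey_add, rey_add, rey_sub, rey_fixed ha, rey_smul_invar hθmW,
      rey_fixed (rey_mem y), sub_self, add_zero]
  have hzz : rey W z + θ ^ m * (z - rey W z) = x := by
    rw [hρz, hzdef, hxy]; ring
  obtain ⟨c, hc, hcu⟩ := hfree z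
  refine ⟨c, ?_, ?_⟩
  · show x = ∑ i, (c i : MvPolynomial (Fin n) k) * bQ i
    rw [hkey c, ← hc, hzz]
  · intro c' hc'
    have hc'' : x = ∑ i, (c' i : MvPolynomial (Fin n) k) * bQ i := hc'
    rw [hkey c'] at hc''
    have hz' : z = ∑ i, (c' i : MvPolynomial (Fin n) k) * bR i := by
      apply hinj
      rw [hzz, hc'']
    exact hcu c' hz'
end

section
/- Let W = S₃ act on ℚ[t₁,t₂,t₃] by permuting variables and let θ = t₁t₂t₃. A basis of Q_m = ℚ[t₁,t₂,t₃]^{S₃} + θ^m·ℚ[t₁,t₂,t₃] as a free module over ℚ[σ₁,σ₂,σ₃] is given by {1} ∪ {θ^m·b : b ∈ B∖{1}}, where B is any basis of ℚ[t₁,t₂,t₃] over ℚ[σ₁,σ₂,σ₃] containing 1 (e.g. the Schubert/Artin basis {1, t₂, t₃, t₂t₃, t₃², t₂t₃²}). In particular Q_m is free of rank 6. -/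
open MvPolynomial

/-- For `W = S₃` acting on `ℚ[t₁,t₂,t₃]` and `θ = t₁t₂t₃`, given any basis
`B` of `ℚ[t₁,t₂,t₃]` over the symmetric polynomials containing `1`, the family
`{1} ∪ {θ^m·b : b ∈ B∖{1}}` is a basis of `Q_m = ℚ[t₁,t₂,t₃]^{S₃} + θ^m·ℚ[t₁,t₂,t₃]`
as a free module over the symmetric polynomials; in particular `Q_m` is free of rank 6. -/
theorem Qm_S3_basis (m : ℕ)
    (b : Fin 6 → MvPolynomial (Fin 3) ℚ) (hb0 : b 0 = 1)
    (hbasis : ∀ x : MvPolynomial (Fin 3) ℚ,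
        ∃! c : Fin 6 → symmetricSubalgebra (Fin 3) ℚ,
          x = ∑ i, (c i : MvPolynomial (Fin 3) ℚ) * b i) :
    ∀ x : MvPolynomial (Fin 3) ℚ,
      (∃ a b' : MvPolynomial (Fin 3) ℚ, a.IsSymmetric ∧
          x = a + (∏ i : Fin 3, X i) ^ m * b') ↔
      ∃! c : Fin 6 → symmetricSubalgebra (Fin 3) ℚ,
        x = ∑ i, (c i : MvPolynomial (Fin 3) ℚ) *
          (if i = 0 then 1 else (∏ i : Fin 3, (X i : MvPolynomial (Fin 3) ℚ)) ^ m * b i) := by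
  set θ : MvPolynomial (Fin 3) ℚ := ∏ i : Fin 3, X i with hθdef
  have hθs : θ.IsSymmetric := by
    intro σ
    rw [hθdef, map_prod]
    simp only [rename_X]
    exact Equiv.prod_comp σ (fun i => (X i : MvPolynomial (Fin 3) ℚ))
  have hθm : θ ^ m ∈ symmetricSubalgebra (Fin 3) ℚ :=
    pow_mem ((mem_symmetricSubalgebra θ).2 hθs) m
  have hθ0 : θ ^ m ≠ 0 :=
    pow_ne_zero _ (Finset.prod_ne_zero_iff.2 fun i _ => X_ne_zero i)
  set T : symmetricSubalgebra (Fin 3) ℚ := ⟨θ ^ m, hθm⟩ with hTdef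
  have hTc : (T : MvPolynomial (Fin 3) ℚ) = θ ^ m := rfl
  -- rewriting the twisted sum as a sum over the basis b
  have sum_eq : ∀ c : Fin 6 → symmetricSubalgebra (Fin 3) ℚ,
      (∑ i, (c i : MvPolynomial (Fin 3) ℚ) * (if i = 0 then 1 else θ ^ m * b i))
        = ∑ i, (((if i = 0 then c 0 else T * c i :
            symmetricSubalgebra (Fin 3) ℚ)) : MvPolynomial (Fin 3) ℚ) * b i := by
    intro c
    rw [Fin.sum_univ_six, Fin.sum_univ_six]
    simp only [if_pos rfl, hb0]
    norm_num
    push_cast [hTc]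
    ring
  -- uniqueness of twisted decompositions
  have uniq : ∀ (x' : MvPolynomial (Fin 3) ℚ)
      (c c' : Fin 6 → symmetricSubalgebra (Fin 3) ℚ),
      x' = (∑ i, (c i : MvPolynomial (Fin 3) ℚ) * (if i = 0 then 1 else θ ^ m * b i)) →
      x' = (∑ i, (c' i : MvPolynomial (Fin 3) ℚ) * (if i = 0 then 1 else θ ^ m * b i)) →
      c = c' := by
    intro x' c c' h h'
    obtain ⟨w, -, hwu⟩ := hbasis x'
    have h1 := hwu _ (h.trans (sum_eq c))
    have h2 := hwu _ (h'.trans (sum_eq c'))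
    have h3 := h1.trans h2.symm
    funext i
    by_cases hi : i = 0
    · subst hi
      simpa using congrFun h3 0
    · have hcf := congrFun h3 i
      simp only [if_neg hi] at hcf
      have hcf' : (θ ^ m) * (c i : MvPolynomial (Fin 3) ℚ)
          = (θ ^ m) * (c' i : MvPolynomial (Fin 3) ℚ) := by
        have := congrArg (Subtype.val) hcf
        push_cast [hTc] at this
        exact_mod_cast this
      exact Subtype.ext (mul_left_cancel₀ hθ0 hcf')
  intro x
  constructor
  · rintro ⟨a, b', ha, rfl⟩
    obtain ⟨d, hd, -⟩ := hbasis b'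
    refine ⟨fun i => if i = 0 then ⟨a, (mem_symmetricSubalgebra a).2 ha⟩ + T * d 0 else d i,
      ?_, ?_⟩
    · rw [hd]
      simp only [Fin.sum_univ_six]
      norm_num
      push_cast [hTc, hb0]
      ring
    · intro c hc
      refine uniq _ c _ hc ?_
      rw [hd]
      simp only [Fin.sum_univ_six]
      norm_num
      push_cast [hTc, hb0]
      ring
  · rintro ⟨c, hc, -⟩
    refine ⟨(c 0 : MvPolynomial (Fin 3) ℚ),
      (c 1 : MvPolynomial (Fin 3) ℚ) * b 1 + (c 2 : MvPolynomial (Fin 3) ℚ) * b 2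
        + (c 3 : MvPolynomial (Fin 3) ℚ) * b 3 + (c 4 : MvPolynomial (Fin 3) ℚ) * b 4
        + (c 5 : MvPolynomial (Fin 3) ℚ) * b 5,
      (mem_symmetricSubalgebra _).1 (c 0).2, ?_⟩
    rw [hc, Fin.sum_univ_six]
    rw [if_pos rfl, if_neg (by decide : ¬((1:Fin 6) = 0)), if_neg (by decide : ¬((2:Fin 6) = 0)),
      if_neg (by decide : ¬((3:Fin 6) = 0)), if_neg (by decide : ¬((4:Fin 6) = 0)),
      if_neg (by decide : ¬((5:Fin 6) = 0))]
    ring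
end

section
/- Let W be a finite reflection group acting on V = ℚⁿ with degrees d₁,…,dₙ, let R = ℚ[V] be graded with variables in degree 2, and let θ ∈ R^W be homogeneous of degree 2k. Then the Hilbert series of Q_m = R^W + θ^m·R is p(t) = (1 - t^{2mk}) / ∏_{i=1}^n (1 - t^{2d_i}) + t^{2mk} / (1 - t²)ⁿ. -/
/-! In degree `j`, `Q_m` is the sum of the invariants `A_j` and `θ^m R_{j-mk}`; both summands
come from submodules stable under taking homogeneous components, and their intersection is
`θ^m A_{j-mk}` because `θ^m` is an invariant non-zero-divisor. The dimension formula for a sum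
of subspaces gives `H_Q + t^{2mk} H_A = H_A + t^{2mk} H_R`, and the given series of `A` and `R`
turn this into the stated identity. -/

open MvPolynomial PowerSeries

/-- The Hilbert series (in cohomological grading, variables in degree 2) of a subset `S`
of the polynomial ring: the coefficient of `t^(2j)` is the dimension of the span of the
homogeneous elements of `S` of (polynomial) degree `j`; odd coefficients vanish. -/
noncomputable def cohomHilbertSeries (n : ℕ) (S : Set (MvPolynomial (Fin n) ℚ)) :
    PowerSeries ℚ :=
  PowerSeries.mk fun d =>
    if Even d then
      (Module.finrank ℚ (Submodule.span ℚ {f ∈ S | f.IsHomogeneous (d / 2)}) : ℚ)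
    else 0

namespace MvPolynomial

section CommSemiring

variable {σ R : Type*} [CommSemiring R]

attribute [local instance] gradedAlgebra in
theorem homogeneousComponent_mul_of_isHomogeneous {τ : MvPolynomial σ R} {e : ℕ}
    (hτ : τ.IsHomogeneous e) (y : MvPolynomial σ R) (j : ℕ) :
    homogeneousComponent j (τ * y) =
      if e ≤ j then τ * homogeneousComponent (j - e) y else 0 := by
  simp only [← decomposition.decompose'_apply]
  exact DirectSum.coe_decompose_mul_of_left_mem (homogeneousSubmodule σ R) j hτ

theorem homogeneousComponent_map_of_isHomogeneous (φ : MvPolynomial σ R →+ MvPolynomial σ R)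
    (hφ : ∀ f j, IsHomogeneous f j → (φ f).IsHomogeneous j) (j : ℕ) (f : MvPolynomial σ R) :
    homogeneousComponent j (φ f) = φ (homogeneousComponent j f) := by
  induction f using MvPolynomial.induction_on' with
  | monomial d c =>
    have hd := isHomogeneous_monomial (R := R) c (rfl : d.degree = d.degree)
    rw [homogeneousComponent_of_mem (hφ _ _ hd), homogeneousComponent_of_mem hd]
    split_ifs <;> simp
  | add p q hp hq => simp only [map_add, hp, hq]

instance [Finite σ] (j : ℕ) : Module.Finite R (homogeneousSubmodule σ R j) :=
  Module.Finite.iff_fg.mpr (homogeneousSubmodule_fg σ R j)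

def IsHomogeneousSubmodule (p : Submodule R (MvPolynomial σ R)) : Prop :=
  ∀ f ∈ p, ∀ j, homogeneousComponent j f ∈ p

theorem span_sep_isHomogeneous (p : Submodule R (MvPolynomial σ R)) (j : ℕ) :
    Submodule.span R {f ∈ (p : Set (MvPolynomial σ R)) | f.IsHomogeneous j} =
      p ⊓ homogeneousSubmodule σ R j := by
  convert Submodule.span_eq (p ⊓ homogeneousSubmodule σ R j)
  ext f
  simp [mem_homogeneousSubmodule]

theorem sup_inf_homogeneousSubmodule {p q : Submodule R (MvPolynomial σ R)}
    (hp : IsHomogeneousSubmodule p) (hq : IsHomogeneousSubmodule q) (j : ℕ) :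
    (p ⊔ q) ⊓ homogeneousSubmodule σ R j =
      p ⊓ homogeneousSubmodule σ R j ⊔ q ⊓ homogeneousSubmodule σ R j := by
  refine le_antisymm ?_
    (le_inf (sup_le_sup inf_le_left inf_le_left) (sup_le inf_le_right inf_le_right))
  rintro f ⟨hf, hfj⟩
  obtain ⟨a, ha, b, hb, rfl⟩ := Submodule.mem_sup.mp hf
  rw [← homogeneousComponent_of_mem hfj |>.trans (if_pos rfl), map_add]
  exact Submodule.add_mem_sup ⟨hp a ha j, homogeneousComponent_mem j a⟩
    ⟨hq b hb j, homogeneousComponent_mem j b⟩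

variable {τ : MvPolynomial σ R} {e : ℕ}

theorem isHomogeneousSubmodule_map_mulLeft_top (hτ : τ.IsHomogeneous e) :
    IsHomogeneousSubmodule ((⊤ : Submodule R (MvPolynomial σ R)).map (LinearMap.mulLeft R τ)) := by
  rintro _ ⟨y, -, rfl⟩ j
  rw [LinearMap.mulLeft_apply, homogeneousComponent_mul_of_isHomogeneous hτ]
  split_ifs
  · exact ⟨_, trivial, rfl⟩
  · exact zero_mem _

theorem map_mulLeft_inf_homogeneousSubmodule_of_lt (hτ : τ.IsHomogeneous e)
    (p : Submodule R (MvPolynomial σ R)) {j : ℕ} (hj : j < e) :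
    p.map (LinearMap.mulLeft R τ) ⊓ homogeneousSubmodule σ R j = ⊥ := by
  refine eq_bot_iff.mpr ?_
  rintro _ ⟨⟨y, -, rfl⟩, hyj⟩
  rw [Submodule.mem_bot, ← homogeneousComponent_eq_self hyj, LinearMap.mulLeft_apply,
    homogeneousComponent_mul_of_isHomogeneous hτ, if_neg (by omega)]

end CommSemiring

theorem map_mulLeft_inf_homogeneousSubmodule {σ R : Type*} [CommRing R] [IsDomain R]
    {τ : MvPolynomial σ R} {e : ℕ} (hτ : τ.IsHomogeneous e) (hτ0 : τ ≠ 0)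
    (p : Submodule R (MvPolynomial σ R)) {j : ℕ} (hj : e ≤ j) :
    p.map (LinearMap.mulLeft R τ) ⊓ homogeneousSubmodule σ R j =
      (p ⊓ homogeneousSubmodule σ R (j - e)).map (LinearMap.mulLeft R τ) := by
  apply le_antisymm
  · rintro _ ⟨⟨y, hy, rfl⟩, hyj⟩
    have hy_eq : y = homogeneousComponent (j - e) y := by
      refine mul_left_cancel₀ hτ0 ?_
      calc τ * y = homogeneousComponent j (τ * y) := (homogeneousComponent_eq_self hyj).symm
        _ = τ * homogeneousComponent (j - e) y := by
          rw [homogeneousComponent_mul_of_isHomogeneous hτ, if_pos hj]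
    exact ⟨y, ⟨hy, hy_eq ▸ homogeneousComponent_mem (j - e) y⟩, rfl⟩
  · rintro _ ⟨y, ⟨hy, hyj⟩, rfl⟩
    refine ⟨⟨y, hy, rfl⟩, ?_⟩
    have := hτ.mul hyj
    rwa [Nat.add_sub_cancel' hj] at this

end MvPolynomial

def fixedSubmodule (W M : Type*) [Monoid W] [AddCommGroup M] [Module ℚ M]
    [DistribMulAction W M] : Submodule ℚ M where
  carrier := {x | ∀ w : W, w • x = x}
  add_mem' ha hb w := by rw [smul_add, ha w, hb w]
  zero_mem' w := smul_zero w
  smul_mem' q x hx w := by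
    rw [← DistribMulAction.toAddMonoidHom_apply, map_rat_smul,
      DistribMulAction.toAddMonoidHom_apply, hx w]

theorem coe_fixedSubring {W : Type*} [Group W] {R : Type*} [CommRing R] [Algebra ℚ R]
    [MulSemiringAction W R] : (fixedSubring W R : Set R) = fixedSubmodule W R :=
  rfl

section FixedPoints

variable {W : Type*} [Monoid W]

theorem isHomogeneousSubmodule_fixedSubmodule {σ : Type*}
    [DistribMulAction W (MvPolynomial σ ℚ)]
    (hgraded : ∀ (w : W) (f : MvPolynomial σ ℚ) (j : ℕ),
      f.IsHomogeneous j → (w • f).IsHomogeneous j) :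
    IsHomogeneousSubmodule (fixedSubmodule W (MvPolynomial σ ℚ)) := fun f hf j w => by
  rw [← DistribMulAction.toAddMonoidHom_apply,
    ← homogeneousComponent_map_of_isHomogeneous _ (hgraded w),
    DistribMulAction.toAddMonoidHom_apply, hf w]

theorem fixedSubmodule_inf_map_mulLeft {R : Type*} [CommRing R] [IsDomain R] [Algebra ℚ R]
    [MulSemiringAction W R] {τ : R} (hτ : τ ∈ fixedSubmodule W R) (hτ0 : τ ≠ 0) :
    fixedSubmodule W R ⊓ (⊤ : Submodule ℚ R).map (LinearMap.mulLeft ℚ τ) =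
      (fixedSubmodule W R).map (LinearMap.mulLeft ℚ τ) := by
  refine le_antisymm ?_ ?_
  · rintro _ ⟨hx, y, -, rfl⟩
    refine ⟨y, fun w => mul_left_cancel₀ hτ0 ?_, rfl⟩
    calc τ * (w • y) = w • τ * w • y := by rw [hτ w]
      _ = τ * y := (smul_mul' w τ y).symm.trans (hx w)
  · rintro _ ⟨y, hy, rfl⟩
    exact ⟨fun w => by rw [LinearMap.mulLeft_apply, smul_mul', hτ w, hy w], y, trivial, rfl⟩

end FixedPoints

section HilbertSeries

variable {n : ℕ}

theorem coeff_two_mul_cohomHilbertSeries (p : Submodule ℚ (MvPolynomial (Fin n) ℚ)) (j : ℕ) :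
    coeff (2 * j) (cohomHilbertSeries n p) =
      Module.finrank ℚ ↥(p ⊓ homogeneousSubmodule (Fin n) ℚ j) := by
  rw [cohomHilbertSeries, coeff_mk, if_pos (even_two_mul j), Nat.mul_div_cancel_left j two_pos,
    span_sep_isHomogeneous]

theorem coeff_two_mul_add_one_cohomHilbertSeries (S : Set (MvPolynomial (Fin n) ℚ)) (j : ℕ) :
    coeff (2 * j + 1) (cohomHilbertSeries n S) = 0 := by
  rw [cohomHilbertSeries, coeff_mk, if_neg (Nat.not_even_iff_odd.mpr (odd_two_mul_add_one j))]

theorem cohomHilbertSeries_sup_add_inf {p q : Submodule ℚ (MvPolynomial (Fin n) ℚ)}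
    (hp : IsHomogeneousSubmodule p) (hq : IsHomogeneousSubmodule q) :
    cohomHilbertSeries n ↑(p ⊔ q) + cohomHilbertSeries n ↑(p ⊓ q) =
      cohomHilbertSeries n p + cohomHilbertSeries n q := by
  ext d
  obtain ⟨j, rfl | rfl⟩ := Nat.even_or_odd' d
  · simp only [map_add, coeff_two_mul_cohomHilbertSeries]
    rw [sup_inf_homogeneousSubmodule hp hq, inf_inf_distrib_right]
    exact_mod_cast Submodule.finrank_sup_add_finrank_inf_eq _ _
  · simp only [map_add, coeff_two_mul_add_one_cohomHilbertSeries]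

theorem cohomHilbertSeries_map_mulLeft {τ : MvPolynomial (Fin n) ℚ} {e : ℕ}
    (hτ : τ.IsHomogeneous e) (hτ0 : τ ≠ 0) (p : Submodule ℚ (MvPolynomial (Fin n) ℚ)) :
    cohomHilbertSeries n ↑(p.map (LinearMap.mulLeft ℚ τ)) =
      PowerSeries.X ^ (2 * e) * cohomHilbertSeries n p := by
  ext d
  rw [coeff_X_pow_mul']
  obtain ⟨j, rfl | rfl⟩ := Nat.even_or_odd' d
  · split_ifs with hej
    · rw [show 2 * j - 2 * e = 2 * (j - e) by omega, coeff_two_mul_cohomHilbertSeries,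
        coeff_two_mul_cohomHilbertSeries, map_mulLeft_inf_homogeneousSubmodule hτ hτ0 p (by omega)]
      exact_mod_cast (Submodule.equivMapOfInjective _ (mul_right_injective₀ hτ0) _).finrank_eq.symm
    · rw [coeff_two_mul_cohomHilbertSeries,
        map_mulLeft_inf_homogeneousSubmodule_of_lt hτ p (by omega), finrank_bot, Nat.cast_zero]
  · split_ifs with hej
    · rw [show 2 * j + 1 - 2 * e = 2 * (j - e) + 1 by omega,
        coeff_two_mul_add_one_cohomHilbertSeries, coeff_two_mul_add_one_cohomHilbertSeries]
    · exact coeff_two_mul_add_one_cohomHilbertSeries _ j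

end HilbertSeries

theorem Qm_hilbert_series_general
    (n : ℕ) (W : Type*) [Group W]
    [MulSemiringAction W (MvPolynomial (Fin n) ℚ)]
    (hgraded : ∀ (w : W) (f : MvPolynomial (Fin n) ℚ) (j : ℕ),
        f.IsHomogeneous j → (w • f).IsHomogeneous j)
    (d : Fin n → ℕ)
    (hInv : cohomHilbertSeries n
          ((fixedSubring W (MvPolynomial (Fin n) ℚ)) : Set (MvPolynomial (Fin n) ℚ)) *
        ∏ i, (1 - (PowerSeries.X : PowerSeries ℚ) ^ (2 * d i)) = 1)
    (hR : cohomHilbertSeries n (Set.univ) *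
        (1 - (PowerSeries.X : PowerSeries ℚ) ^ 2) ^ n = 1)
    (θ : MvPolynomial (Fin n) ℚ) (hθW : θ ∈ fixedSubring W (MvPolynomial (Fin n) ℚ))
    (hθ0 : θ ≠ 0) (k : ℕ) (hθhom : θ.IsHomogeneous k)
    (m : ℕ) :
    cohomHilbertSeries n
        {x : MvPolynomial (Fin n) ℚ | ∃ a ∈ fixedSubring W (MvPolynomial (Fin n) ℚ),
          ∃ y : MvPolynomial (Fin n) ℚ, x = a + θ ^ m * y} *
      (∏ i, (1 - (PowerSeries.X : PowerSeries ℚ) ^ (2 * d i))) *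
      (1 - (PowerSeries.X : PowerSeries ℚ) ^ 2) ^ n =
    (1 - (PowerSeries.X : PowerSeries ℚ) ^ (2 * m * k)) *
        (1 - (PowerSeries.X : PowerSeries ℚ) ^ 2) ^ n +
      (PowerSeries.X : PowerSeries ℚ) ^ (2 * m * k) *
        ∏ i, (1 - (PowerSeries.X : PowerSeries ℚ) ^ (2 * d i)) := by
  set A := fixedSubmodule W (MvPolynomial (Fin n) ℚ)
  set T := (⊤ : Submodule ℚ (MvPolynomial (Fin n) ℚ)).map (LinearMap.mulLeft ℚ (θ ^ m))
  have hτ : (θ ^ m).IsHomogeneous (m * k) := by simpa only [mul_comm] using hθhom.pow m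
  have hτ0 : θ ^ m ≠ 0 := pow_ne_zero m hθ0
  have hτA : θ ^ m ∈ A := fun w => by rw [smul_pow', hθW w]
  have hQ : {x : MvPolynomial (Fin n) ℚ | ∃ a ∈ fixedSubring W (MvPolynomial (Fin n) ℚ),
      ∃ y : MvPolynomial (Fin n) ℚ, x = a + θ ^ m * y} = ↑(A ⊔ T) := by
    ext x
    rw [SetLike.mem_coe, Submodule.mem_sup]
    constructor
    · rintro ⟨a, ha, y, rfl⟩
      exact ⟨a, ha, _, ⟨y, trivial, rfl⟩, rfl⟩
    · rintro ⟨a, ha, _, ⟨y, -, rfl⟩, rfl⟩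
      exact ⟨a, ha, y, rfl⟩
  have key := cohomHilbertSeries_sup_add_inf (isHomogeneousSubmodule_fixedSubmodule hgraded)
    (isHomogeneousSubmodule_map_mulLeft_top hτ)
  rw [fixedSubmodule_inf_map_mulLeft hτA hτ0, cohomHilbertSeries_map_mulLeft hτ hτ0,
    cohomHilbertSeries_map_mulLeft hτ hτ0, Submodule.top_coe, ← hQ, ← coe_fixedSubring,
    ← mul_assoc] at key
  linear_combination (∏ i, (1 - (PowerSeries.X : PowerSeries ℚ) ^ (2 * d i))) *
      (1 - PowerSeries.X ^ 2) ^ n * key +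
    (1 - PowerSeries.X ^ (2 * m * k)) * (1 - PowerSeries.X ^ 2) ^ n * hInv +
    PowerSeries.X ^ (2 * m * k) * (∏ i, (1 - (PowerSeries.X : PowerSeries ℚ) ^ (2 * d i))) * hR

/-- For a finite (reflection) group `W` acting on `R = ℚ[V]` (variables in
cohomological degree 2) with invariant ring a polynomial ring on generators of degrees
`2d₁,…,2dₙ`, `R` free of rank `|W|` over `R^W`, and `θ ∈ R^W` homogeneous of degree `2k`,
the Hilbert series of `Q_m = R^W + θ^m·R` is
`(1 - t^{2mk})/∏(1 - t^{2dᵢ}) + t^{2mk}/(1 - t²)ⁿ`. -/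
theorem Qm_hilbert_series
    (n : ℕ) (W : Type*) [Group W] [Fintype W]
    [MulSemiringAction W (MvPolynomial (Fin n) ℚ)]
    (hgraded : ∀ (w : W) (f : MvPolynomial (Fin n) ℚ) (j : ℕ),
        f.IsHomogeneous j → (w • f).IsHomogeneous j)
    (d : Fin n → ℕ)
    (hInv : cohomHilbertSeries n
          ((fixedSubring W (MvPolynomial (Fin n) ℚ)) : Set (MvPolynomial (Fin n) ℚ)) *
        ∏ i, (1 - (PowerSeries.X : PowerSeries ℚ) ^ (2 * d i)) = 1)
    (hR : cohomHilbertSeries n (Set.univ) *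
        (1 - (PowerSeries.X : PowerSeries ℚ) ^ 2) ^ n = 1)
    (θ : MvPolynomial (Fin n) ℚ) (hθW : θ ∈ fixedSubring W (MvPolynomial (Fin n) ℚ))
    (hθ0 : θ ≠ 0) (k : ℕ) (hθhom : θ.IsHomogeneous k)
    (bR : Fin (Fintype.card W) → MvPolynomial (Fin n) ℚ)
    (hfree : ∀ x : MvPolynomial (Fin n) ℚ,
        ∃! c : Fin (Fintype.card W) → fixedSubring W (MvPolynomial (Fin n) ℚ),
          x = ∑ i, (c i : MvPolynomial (Fin n) ℚ) * bR i)
    (m : ℕ) :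
    cohomHilbertSeries n
        {x : MvPolynomial (Fin n) ℚ | ∃ a ∈ fixedSubring W (MvPolynomial (Fin n) ℚ),
          ∃ y : MvPolynomial (Fin n) ℚ, x = a + θ ^ m * y} *
      (∏ i, (1 - (PowerSeries.X : PowerSeries ℚ) ^ (2 * d i))) *
      (1 - (PowerSeries.X : PowerSeries ℚ) ^ 2) ^ n =
    (1 - (PowerSeries.X : PowerSeries ℚ) ^ (2 * m * k)) *
        (1 - (PowerSeries.X : PowerSeries ℚ) ^ 2) ^ n +
      (PowerSeries.X : PowerSeries ℚ) ^ (2 * m * k) *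
        ∏ i, (1 - (PowerSeries.X : PowerSeries ℚ) ^ (2 * d i)) :=
  Qm_hilbert_series_general n W hgraded d hInv hR θ hθW hθ0 k hθhom m
end
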